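/- Let G₀ be the graph with vertex set {a₁, a₂, a₃, x₁, x₂} and edges a₁a₂, a₁a₃, a₂a₃, a₁x₁, a₂x₂, x₁x₂. Let H be a graph obtained from G₀ by attaching pairwise disjoint sets U₁, U₂, U₃, U₄, U₅ of new end vertices to the vertices a₁, a₂, a₃, x₁, x₂ respectively (each new vertex adjacent only to the vertex it is attached to). If U₃ ∪ U₄ ∪ U₅ is nonempty, then there is no commutative semigroup S with zero such that Γ(S) is isomorphic to H. -/

import Mathlib

universe u v w
/-- A commutative semigroup with a zero element `0` satisfying `0 * a = 0`. -/
class CommSemigroupWithZero (S : Type u) extends CommSemigroup S, Zero S where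
  zero_mul' : ∀ a : S, 0 * a = 0

/-- The zero-divisor graph of `S`, as a simple graph on all of `S`:
distinct nonzero `x, y` are adjacent iff `x * y = 0`.  (The element `0` and the
non-zero-divisors are isolated vertices, so adjacency, end vertices and cycles
are exactly those of `Γ(S)`.) -/
def zdGraph (S : Type u) [CommSemigroupWithZero S] : SimpleGraph S where
  Adj x y := x ≠ y ∧ x * y = 0 ∧ x ≠ 0 ∧ y ≠ 0
  symm := by
    constructor
    rintro x y ⟨h1, h2, h3, h4⟩
    exact ⟨h1.symm, by rwa [mul_comm], h4, h3⟩
  loopless := ⟨fun x h => h.1 rfl⟩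

/-- `x` is a vertex of `Γ(S)`: a nonzero zero-divisor. -/
def IsVertex (S : Type u) [CommSemigroupWithZero S] (x : S) : Prop :=
  x ≠ 0 ∧ ∃ y : S, y ≠ 0 ∧ x * y = 0

/-- `x` is an end vertex of `Γ(S)`: it has exactly one neighbour. -/
def IsEndVertex (S : Type u) [CommSemigroupWithZero S] (x : S) : Prop :=
  ∃! y : S, (zdGraph S).Adj x y
/-- The zero-divisor graph of `S` on its vertex set (the nonzero zero-divisors). -/
def zdvGraph (S : Type u) [CommSemigroupWithZero S] :
    SimpleGraph {x : S // x ≠ 0 ∧ ∃ y : S, y ≠ 0 ∧ x * y = 0} where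
  Adj a b := a ≠ b ∧ (a : S) * (b : S) = 0
  symm := by
    constructor
    rintro a b ⟨h1, h2⟩
    exact ⟨h1.symm, by rwa [mul_comm]⟩
  loopless := ⟨fun a h => h.1 rfl⟩

/-- `G` is (isomorphic to) the zero-divisor graph of some commutative semigroup with zero. -/
def IsZDGraphOf {α : Type v} (G : SimpleGraph α) : Prop :=
  ∃ (S : Type u) (inst : CommSemigroupWithZero S), Nonempty ((@zdvGraph S inst) ≃g G)

/-- The edge relation of the base graph `G₀` on vertices `a₁ = 0, a₂ = 1, a₃ = 2,
x₁ = 3, x₂ = 4` (oriented version). Edges: a₁a₂, a₁a₃, a₂a₃, a₁x₁, a₂x₂, x₁x₂. -/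
def eAdj (i j : Fin 5) : Prop :=
  (i = 0 ∧ j = 1) ∨ (i = 0 ∧ j = 2) ∨ (i = 1 ∧ j = 2) ∨
  (i = 0 ∧ j = 3) ∨ (i = 1 ∧ j = 4) ∨ (i = 3 ∧ j = 4)

/-- The (symmetrized) adjacency relation of `G₀`. -/
def baseAdj (i j : Fin 5) : Prop := eAdj i j ∨ eAdj j i

/-- The graph obtained from `G₀` by attaching, for each `i : Fin 5`, the set `U i` of new
end vertices to the `i`-th vertex of `G₀` (each new vertex adjacent only to that vertex).
Here `U 0, U 1, U 2, U 3, U 4` are the sets attached to `a₁, a₂, a₃, x₁, x₂`. -/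
def Hgraph (U : Fin 5 → Type u) : SimpleGraph (Fin 5 ⊕ (Σ i, U i)) where
  Adj x y :=
    match x, y with
    | Sum.inl i, Sum.inl j => baseAdj i j
    | Sum.inl i, Sum.inr p => i = p.1
    | Sum.inr p, Sum.inl i => i = p.1
    | Sum.inr _, Sum.inr _ => False
  symm := by
    constructor
    rintro (i | p) (j | q) h
    · exact Or.symm h
    · exact h
    · exact h
    · exact h.elim
  loopless := by
    constructor
    rintro (i | p) h
    · rcases h with h | h <;>
        rcases h with ⟨rfl, h⟩ | ⟨rfl, h⟩ | ⟨rfl, h⟩ | ⟨rfl, h⟩ | ⟨rfl, h⟩ | ⟨rfl, h⟩ <;>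
        exact absurd h (by decide)
    · exact h

/-! If `x` and `y` are distinct non-adjacent vertices of `Γ(S)`, then `xy` is again a vertex, and it
annihilates every neighbour of `x` or of `y`. So the neighbourhoods of two non-adjacent vertices of a
zero-divisor graph lie in one closed neighbourhood. In `H`, one of these neighbourhoods contains an end
vertex `e` attached to `v`, so that closed neighbourhood must be the one of `e` or of `v`; but for the
pairs `a₃, x₁` and `a₃, x₂` there is always another neighbour that is neither `v` nor adjacent to `v`. -/

namespace SimpleGraph

variable {V W : Type*}

def NonadjNeighborsDominated (G : SimpleGraph V) : Prop :=
  ∀ ⦃a b : V⦄, a ≠ b → ¬G.Adj a b → ∃ c, ∀ r, G.Adj r a ∨ G.Adj r b → r = c ∨ G.Adj r c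

theorem NonadjNeighborsDominated.of_iso {G : SimpleGraph V} {G' : SimpleGraph W} (φ : G ≃g G')
    (hG : G.NonadjNeighborsDominated) : G'.NonadjNeighborsDominated := by
  intro a b hab hadj
  obtain ⟨c, hc⟩ := hG (φ.symm.injective.ne hab) (fun h ↦ hadj (φ.symm.map_adj_iff.1 h))
  refine ⟨φ c, fun r hr ↦ ?_⟩
  have hr' := hc (φ.symm r) (hr.imp φ.symm.map_adj_iff.2 φ.symm.map_adj_iff.2)
  rw [← φ.map_adj_iff, φ.apply_symm_apply] at hr'
  exact hr'.imp_left fun h ↦ by rw [← h, φ.apply_symm_apply]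

theorem not_nonadjNeighborsDominated_of_pendant {G : SimpleGraph V} {a b e v r : V} (hab : a ≠ b)
    (hnadj : ¬G.Adj a b) (he : G.Adj e a ∨ G.Adj e b) (hev : ∀ x, G.Adj e x ↔ x = v)
    (hr : G.Adj r a ∨ G.Adj r b) (hrv : r ≠ v) (hnrv : ¬G.Adj r v) :
    ¬G.NonadjNeighborsDominated := by
  intro hG
  obtain ⟨c, hc⟩ := hG hab hnadj
  have hcv : c = e ∨ c = v := (hc e he).imp Eq.symm (hev c).1
  have hre : ¬G.Adj r e := fun h ↦ hrv ((hev r).1 h.symm)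
  rcases hcv with rfl | rfl <;> rcases hc r hr with h | h
  · exact hnrv (h ▸ (hev v).2 rfl)
  · exact hre h
  · exact hrv h
  · exact hnrv h

end SimpleGraph

theorem CommSemigroupWithZero.nonadjNeighborsDominated_zdvGraph (S : Type u)
    [CommSemigroupWithZero S] : (zdvGraph S).NonadjNeighborsDominated := by
  rintro ⟨x, hx, y, hy, hxy⟩ b hab hadj
  have hxb : x * b ≠ 0 := fun h ↦ hadj ⟨hab, h⟩
  have hxb_zd : x * b * y = 0 := by
    rw [mul_assoc, mul_comm (b : S), ← mul_assoc, hxy, CommSemigroupWithZero.zero_mul']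
  refine ⟨⟨x * b, hxb, y, hy, hxb_zd⟩, fun r hr ↦ or_iff_not_imp_left.2 fun hrc ↦ ⟨hrc, ?_⟩⟩
  rcases hr with ⟨-, hr⟩ | ⟨-, hr⟩
  · change (r : S) * x = 0 at hr
    change (r : S) * (x * b) = 0
    rw [← mul_assoc, hr, CommSemigroupWithZero.zero_mul']
  · change (r : S) * (x * b) = 0
    rw [mul_comm x, ← mul_assoc, hr, CommSemigroupWithZero.zero_mul']

theorem Hgraph_adj_inr_iff {U : Fin 5 → Type u} (p : Σ i, U i) (x : Fin 5 ⊕ (Σ i, U i)) :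
    (Hgraph U).Adj (Sum.inr p) x ↔ x = Sum.inl p.1 := by
  rcases x with i | q
  · exact ⟨congrArg Sum.inl, fun h ↦ Sum.inl_injective h⟩
  · exact ⟨False.elim, fun h ↦ Sum.inr_ne_inl h |>.elim⟩

instance baseAdj.instDecidable (i j : Fin 5) : Decidable (baseAdj i j) := by
  unfold baseAdj eAdj; infer_instance

theorem not_nonadjNeighborsDominated_Hgraph {U : Fin 5 → Type u} {a b v r : Fin 5}
    (hU : Nonempty (U v)) (hnadj : ¬baseAdj a b ∧ a ≠ b := by decide)
    (hv : v = a ∨ v = b := by decide)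
    (hr : (baseAdj r a ∨ baseAdj r b) ∧ r ≠ v ∧ ¬baseAdj r v := by decide) :
    ¬(Hgraph U).NonadjNeighborsDominated := by
  obtain ⟨e⟩ := hU
  exact SimpleGraph.not_nonadjNeighborsDominated_of_pendant (e := Sum.inr ⟨v, e⟩)
    (v := Sum.inl v) (r := Sum.inl r) (Sum.inl_injective.ne hnadj.2) hnadj.1
    (hv.imp Eq.symm Eq.symm) (Hgraph_adj_inr_iff _) hr.1 (Sum.inl_injective.ne hr.2.1) hr.2.2

theorem stmt6 (U : Fin 5 → Type u)
    (hne : Nonempty (U 2) ∨ Nonempty (U 3) ∨ Nonempty (U 4)) :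
    ¬ IsZDGraphOf (Hgraph U) := by
  rintro ⟨S, _, ⟨φ⟩⟩
  have hH := (CommSemigroupWithZero.nonadjNeighborsDominated_zdvGraph S).of_iso φ
  rcases hne with hU | hU | hU
  · exact (not_nonadjNeighborsDominated_Hgraph (a := 2) (b := 3) (r := 4) hU) hH
  · exact (not_nonadjNeighborsDominated_Hgraph (a := 2) (b := 3) (r := 1) hU) hH
  · exact (not_nonadjNeighborsDominated_Hgraph (a := 2) (b := 4) (r := 0) hU) hH
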